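/- Let F ∈ ℂ[x_1,…,x_n] be a nonzero homogeneous form of degree d, let α ∈ T_1 be a linear form in the dual variables, and suppose F = c_1 ℓ_1^d + … + c_r ℓ_r^d where ℓ_1,…,ℓ_r are linear forms and c_i ∈ ℂ. If α∘ℓ_i ≠ 0 for every i (i.e., no point [ℓ_i] lies on the hyperplane defined by α), then r ≥ al(F) − al(α∘F). -/

import Mathlib

open MvPolynomial

/-- The iterated partial derivative `∂^m` applied to `F`: on a monomial `x^k` it gives
`(∏ᵢ kᵢ(kᵢ-1)⋯(kᵢ-mᵢ+1)) · x^(k-m)`, i.e. each dual variable `αᵢ` acts as `∂/∂xᵢ`. -/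
noncomputable def mderiv {σ : Type*} (m : σ →₀ ℕ) (F : MvPolynomial σ ℂ) :
    MvPolynomial σ ℂ :=
  (AddMonoidAlgebra.coeff F).sum fun k c =>
    MvPolynomial.monomial (k - m) (c * ∏ i ∈ m.support, (Nat.descFactorial (k i) (m i) : ℂ))

/-- The apolarity action `Θ ∘ F` of a polynomial `Θ` in the dual variables on `F`,
as a constant-coefficient differential operator. -/
noncomputable def diffOp {σ : Type*} (Θ F : MvPolynomial σ ℂ) : MvPolynomial σ ℂ :=
  (AddMonoidAlgebra.coeff Θ).sum fun m c => c • mderiv m F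

/-- Apolar length `al F`: the dimension of the space `Diff(F) = {Θ ∘ F : Θ ∈ T}` of all
partial derivatives of `F` of all orders (including `F` itself). -/
noncomputable def apolarLength {σ : Type*} (F : MvPolynomial σ ℂ) : ℕ :=
  Module.finrank ℂ (Submodule.span ℂ (Set.range fun Θ => diffOp Θ F))

/-- The Hilbert function of the apolar algebra of `F`: the dimension of the span of the
`i`-th order partial derivatives `{Θ ∘ F : Θ homogeneous of degree i}`. -/
noncomputable def hilbFn {σ : Type*} (F : MvPolynomial σ ℂ) (i : ℕ) : ℕ :=
  Module.finrank ℂ (Submodule.span ℂ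
    {G : MvPolynomial σ ℂ | ∃ Θ : MvPolynomial σ ℂ, Θ.IsHomogeneous i ∧ diffOp Θ F = G})

/-- Waring rank of a degree-`d` form: the least `r` such that
`F = c₁ ℓ₁^d + ⋯ + c_r ℓ_r^d` for linear forms `ℓᵢ` and scalars `cᵢ ∈ ℂ`. -/
noncomputable def waringRank {σ : Type*} [Fintype σ] (d : ℕ) (F : MvPolynomial σ ℂ) : ℕ :=
  sInf {r : ℕ | ∃ (c : Fin r → ℂ) (v : Fin r → σ → ℂ),
    F = ∑ i, c i • (∑ j, v i j • MvPolynomial.X j) ^ d}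

/-!
Every partial derivative of `F = ∑ cᵢ ℓᵢ^d` lies in `V = span {ℓᵢ^e : e ≤ d}`, which is stable
under differentiation. A linear `α` acts as a derivation sending each `ℓᵢ` to a nonzero constant,
so `α∘V` contains every `ℓᵢ^e` with `e < d`; only the `r` top powers `ℓᵢ^d` can be missed, and
`dim V - dim α∘V ≤ r`. Since `Diff(α∘F) = α∘Diff(F)` and the kernel of `α∘` on `Diff(F) ⊆ V` is
contained in its kernel on `V`, `al(F) - al(α∘F) ≤ dim V - dim α∘V`.
-/

section Mderiv

variable {σ : Type*}

lemma mderiv_monomial (m k : σ →₀ ℕ) (c : ℂ) :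
    mderiv m (monomial k c) =
      monomial (k - m) (c * ∏ i ∈ m.support, ((k i).descFactorial (m i) : ℂ)) :=
  sum_monomial_eq (by simp)

lemma mderiv_add (m : σ →₀ ℕ) (F G : MvPolynomial σ ℂ) :
    mderiv m (F + G) = mderiv m F + mderiv m G := by
  unfold mderiv
  rw [AddMonoidAlgebra.coeff_add]
  exact Finsupp.sum_add_index' (fun _ => by simp) fun _ _ _ => by rw [add_mul, map_add]

lemma mderiv_smul (m : σ →₀ ℕ) (a : ℂ) (F : MvPolynomial σ ℂ) :
    mderiv m (a • F) = a • mderiv m F := by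
  unfold mderiv
  rw [AddMonoidAlgebra.coeff_smul, Finsupp.sum_smul_index' fun _ => by simp, Finsupp.smul_sum]
  simp only [smul_eq_mul, mul_assoc, smul_monomial]

noncomputable def mderivLinear (m : σ →₀ ℕ) : MvPolynomial σ ℂ →ₗ[ℂ] MvPolynomial σ ℂ where
  toFun := mderiv m
  map_add' := mderiv_add m
  map_smul' := mderiv_smul m

@[simp]
lemma mderivLinear_apply (m : σ →₀ ℕ) (F : MvPolynomial σ ℂ) : mderivLinear m F = mderiv m F :=
  rfl

lemma mderiv_sum {ι : Type*} (m : σ →₀ ℕ) (s : Finset ι) (f : ι → MvPolynomial σ ℂ) :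
    mderiv m (∑ i ∈ s, f i) = ∑ i ∈ s, mderiv m (f i) :=
  map_sum (mderivLinear m) f s

lemma mderiv_zero (F : MvPolynomial σ ℂ) : mderiv 0 F = F := by
  induction F using MvPolynomial.induction_on' with
  | monomial k c => simp [mderiv_monomial]
  | add P Q hP hQ => rw [mderiv_add, hP, hQ]

lemma prod_descFactorial_eq_of_support_subset (k m : σ →₀ ℕ) {s : Finset σ}
    (h : m.support ⊆ s) :
    ∏ i ∈ m.support, ((k i).descFactorial (m i) : ℂ) =
      ∏ i ∈ s, ((k i).descFactorial (m i) : ℂ) :=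
  Finset.prod_subset h fun i _ hi => by simp [Finsupp.notMem_support_iff.mp hi]

lemma mderiv_mderiv (m m' : σ →₀ ℕ) (F : MvPolynomial σ ℂ) :
    mderiv m (mderiv m' F) = mderiv (m' + m) F := by
  classical
  induction F using MvPolynomial.induction_on' with
  | add P Q hP hQ => rw [mderiv_add, mderiv_add, mderiv_add, hP, hQ]
  | monomial k c =>
    rw [mderiv_monomial, mderiv_monomial, mderiv_monomial, mul_assoc, tsub_add_eq_tsub_tsub]
    congr 2
    have hsupp : (m' + m).support ⊆ m.support ∪ m'.support :=
      Finsupp.support_add.trans (Finset.union_comm _ _).le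
    rw [prod_descFactorial_eq_of_support_subset k m' Finset.subset_union_right,
      prod_descFactorial_eq_of_support_subset (k - m') m Finset.subset_union_left,
      prod_descFactorial_eq_of_support_subset k (m' + m) hsupp, ← Finset.prod_mul_distrib]
    refine Finset.prod_congr rfl fun i _ => ?_
    rw [Finsupp.add_apply, Finsupp.tsub_apply, ← Nat.descFactorial_mul_descFactorial
      (Nat.le_add_right (m' i) (m i)), Nat.add_sub_cancel_left]
    push_cast
    ring

lemma mderiv_single_one (j : σ) (F : MvPolynomial σ ℂ) :
    mderiv (Finsupp.single j 1) F = pderiv j F := by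
  induction F using MvPolynomial.induction_on' with
  | monomial k c =>
    rw [mderiv_monomial, pderiv_monomial, Finsupp.support_single j one_ne_zero,
      Finset.prod_singleton, Finsupp.single_eq_same, Nat.descFactorial_one]
  | add P Q hP hQ => rw [mderiv_add, map_add, hP, hQ]

lemma mderiv_mem_of_forall_pderiv_mem {W : Submodule ℂ (MvPolynomial σ ℂ)}
    (hW : ∀ j, ∀ P ∈ W, pderiv j P ∈ W) (m : σ →₀ ℕ) {P : MvPolynomial σ ℂ} (hP : P ∈ W) :
    mderiv m P ∈ W := by
  induction m using Finsupp.induction generalizing P with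
  | zero => rwa [mderiv_zero]
  | single_add j b m _ _ ih =>
    have hsingle : ∀ b, mderiv (Finsupp.single j b) P ∈ W := by
      intro b
      induction b with
      | zero => rwa [Finsupp.single_zero, mderiv_zero]
      | succ b ihb =>
        rw [Finsupp.single_add, ← mderiv_mderiv, mderiv_single_one]
        exact hW j _ ihb
    rw [← mderiv_mderiv]
    exact ih (hsingle b)

end Mderiv

section DiffOp

variable {σ : Type*}

lemma diffOp_eq_sum (Θ F : MvPolynomial σ ℂ) :
    diffOp Θ F = ∑ m ∈ Θ.support, coeff m Θ • mderiv m F :=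
  sum_def

noncomputable def diffOpLinear (Θ : MvPolynomial σ ℂ) : MvPolynomial σ ℂ →ₗ[ℂ] MvPolynomial σ ℂ :=
  ∑ m ∈ Θ.support, coeff m Θ • mderivLinear m

@[simp]
lemma diffOpLinear_apply (Θ F : MvPolynomial σ ℂ) : diffOpLinear Θ F = diffOp Θ F := by
  simp [diffOpLinear, diffOp_eq_sum]

lemma diffOp_comm (Θ Ψ F : MvPolynomial σ ℂ) :
    diffOp Θ (diffOp Ψ F) = diffOp Ψ (diffOp Θ F) := by
  simp only [diffOp_eq_sum, mderiv_sum, mderiv_smul, mderiv_mderiv, Finset.smul_sum, smul_smul]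
  rw [Finset.sum_comm]
  exact Finset.sum_congr rfl fun _ _ => Finset.sum_congr rfl fun _ _ => by
    rw [mul_comm, add_comm]

lemma diffOp_mem_of_forall_pderiv_mem {W : Submodule ℂ (MvPolynomial σ ℂ)}
    (hW : ∀ j, ∀ P ∈ W, pderiv j P ∈ W) (Θ : MvPolynomial σ ℂ) {F : MvPolynomial σ ℂ}
    (hF : F ∈ W) : diffOp Θ F ∈ W := by
  rw [diffOp_eq_sum]
  exact W.sum_mem fun m _ => W.smul_mem _ (mderiv_mem_of_forall_pderiv_mem hW m hF)

lemma span_range_diffOp_le {W : Submodule ℂ (MvPolynomial σ ℂ)}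
    (hW : ∀ j, ∀ P ∈ W, pderiv j P ∈ W) {F : MvPolynomial σ ℂ} (hF : F ∈ W) :
    Submodule.span ℂ (Set.range fun Θ => diffOp Θ F) ≤ W :=
  Submodule.span_le.2 <| Set.range_subset_iff.2 fun Θ => diffOp_mem_of_forall_pderiv_mem hW Θ hF

lemma span_range_diffOp_diffOp (Θ F : MvPolynomial σ ℂ) :
    Submodule.span ℂ (Set.range fun Ψ => diffOp Ψ (diffOp Θ F)) =
      (Submodule.span ℂ (Set.range fun Ψ => diffOp Ψ F)).map (diffOpLinear Θ) := by
  rw [Submodule.map_span, ← Set.range_comp]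
  congr 2
  ext Ψ
  simp [diffOp_comm Ψ Θ]

end DiffOp

lemma MvPolynomial.IsHomogeneous.exists_single_eq_of_mem_support {σ R : Type*} [CommSemiring R]
    {P : MvPolynomial σ R} (hP : P.IsHomogeneous 1) {m : σ →₀ ℕ} (hm : m ∈ P.support) :
    ∃ j, Finsupp.single j 1 = m := by
  have hdeg : m ∈ {m : σ →₀ ℕ | m.degree = 1} := by
    rw [Set.mem_ofPred_eq, Finsupp.degree_eq_weight_one]
    exact hP (mem_support_iff.mp hm)
  rwa [← Finsupp.range_single_one] at hdeg

lemma MvPolynomial.eq_C_of_isHomogeneous_zero {σ R : Type*} [CommSemiring R]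
    {P : MvPolynomial σ R} (hP : P.IsHomogeneous 0) : P = C (coeff 0 P) :=
  totalDegree_eq_zero_iff_eq_C.1 ((totalDegree_zero_iff_isHomogeneous σ).2 hP)

section LinearForm

variable {σ : Type*}

lemma diffOp_mul_of_isHomogeneous_one {α : MvPolynomial σ ℂ} (hα : α.IsHomogeneous 1)
    (P Q : MvPolynomial σ ℂ) : diffOp α (P * Q) = P • diffOp α Q + Q • diffOp α P := by
  simp only [diffOp_eq_sum, Finset.smul_sum, ← Finset.sum_add_distrib]
  refine Finset.sum_congr rfl fun m hm => ?_
  obtain ⟨j, rfl⟩ := hα.exists_single_eq_of_mem_support hm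
  simp only [mderiv_single_one, Derivation.leibniz, smul_add, smul_comm _ (coeff _ α)]

noncomputable def diffOpDerivation {α : MvPolynomial σ ℂ} (hα : α.IsHomogeneous 1) :
    Derivation ℂ (MvPolynomial σ ℂ) (MvPolynomial σ ℂ) :=
  Derivation.mk' (diffOpLinear α) (by simpa using diffOp_mul_of_isHomogeneous_one hα)

@[simp]
lemma diffOpDerivation_apply {α : MvPolynomial σ ℂ} (hα : α.IsHomogeneous 1)
    (F : MvPolynomial σ ℂ) : diffOpDerivation hα F = diffOp α F := by
  simp [diffOpDerivation]

lemma isHomogeneous_diffOp {α P : MvPolynomial σ ℂ} (hα : α.IsHomogeneous 1) {n : ℕ}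
    (hP : P.IsHomogeneous n) : (diffOp α P).IsHomogeneous (n - 1) := by
  rw [diffOp_eq_sum]
  refine IsHomogeneous.sum _ _ _ fun m hm => ?_
  obtain ⟨j, rfl⟩ := hα.exists_single_eq_of_mem_support hm
  rw [mderiv_single_one, smul_eq_C_mul, ← zero_add (n - 1)]
  exact (isHomogeneous_C _ _).mul hP.pderiv

end LinearForm

section Finrank

open Module

variable {K M N : Type*} [DivisionRing K] [AddCommGroup M] [Module K M] [AddCommGroup N]
  [Module K N]

lemma Submodule.finrank_map_add_finrank_inf_ker (f : M →ₗ[K] N) (p : Submodule K M)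
    [FiniteDimensional K p] :
    finrank K (p.map f) + finrank K ↥(p ⊓ LinearMap.ker f) = finrank K p := by
  have h := (f.domRestrict p).finrank_range_add_finrank_ker
  rwa [LinearMap.range_domRestrict, LinearMap.ker_domRestrict,
    ← Submodule.finrank_map_subtype_eq, Submodule.map_comap_subtype] at h

lemma Submodule.finrank_sub_finrank_map_le (f : M →ₗ[K] N) {p q : Submodule K M} (hpq : p ≤ q)
    [FiniteDimensional K q] :
    finrank K p - finrank K (p.map f) ≤ finrank K q - finrank K (q.map f) := by
  have := Submodule.finiteDimensional_of_le hpq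
  have hp := p.finrank_map_add_finrank_inf_ker f
  have hq := q.finrank_map_add_finrank_inf_ker f
  have hker := Submodule.finrank_mono (inf_le_inf_right (LinearMap.ker f) hpq)
  omega

end Finrank

section PowersSpan

open Module

variable (K : Type*) {A ι : Type*} [Field K] [CommRing A] [Algebra K A]

def powersSpan (ℓ : ι → A) (d : ℕ) : Submodule K A :=
  Submodule.span K (Set.range fun p : ι × Fin (d + 1) => ℓ p.1 ^ (p.2 : ℕ))

variable {K}

lemma pow_mem_powersSpan (ℓ : ι → A) {d e : ℕ} (he : e ≤ d) (i : ι) :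
    ℓ i ^ e ∈ powersSpan K ℓ d :=
  Submodule.subset_span ⟨(i, ⟨e, Nat.lt_succ_of_le he⟩), rfl⟩

instance [Finite ι] (ℓ : ι → A) (d : ℕ) : FiniteDimensional K (powersSpan K ℓ d) :=
  FiniteDimensional.span_of_finite K (Set.finite_range _)

lemma Derivation.map_pow_succ_of_eq_algebraMap (δ : Derivation K A A) {x : A} {c : K}
    (h : δ x = algebraMap K A c) (e : ℕ) : δ (x ^ (e + 1)) = ((e + 1 : K) * c) • x ^ e := by
  rw [δ.leibniz_pow, h, Nat.add_sub_cancel, smul_eq_mul, ← Algebra.commutes, ← Algebra.smul_def,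
    ← Nat.cast_smul_eq_nsmul K, smul_smul]
  push_cast
  rfl

variable {ℓ : ι → A} {c : ι → K}

lemma Derivation.apply_mem_powersSpan (δ : Derivation K A A) (hδ : ∀ i, δ (ℓ i) = algebraMap K A (c i))
    {d : ℕ} {P : A} (hP : P ∈ powersSpan K ℓ d) : δ P ∈ powersSpan K ℓ d := by
  suffices (powersSpan K ℓ d).map (δ : A →ₗ[K] A) ≤ powersSpan K ℓ d from this ⟨P, hP, rfl⟩
  rw [powersSpan, Submodule.map_span_le]
  rintro _ ⟨⟨i, _ | e, he⟩, rfl⟩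
  · simp
  · dsimp only
    rw [Derivation.coeFn_coe, δ.map_pow_succ_of_eq_algebraMap (hδ i)]
    exact Submodule.smul_mem _ _ (pow_mem_powersSpan ℓ (by omega) i)

lemma Derivation.powersSpan_le_map_sup [CharZero K] (δ : Derivation K A A)
    (hδ : ∀ i, δ (ℓ i) = algebraMap K A (c i)) (hc : ∀ i, c i ≠ 0) (d : ℕ) :
    powersSpan K ℓ d ≤
      (powersSpan K ℓ d).map (δ : A →ₗ[K] A) ⊔ Submodule.span K (Set.range fun i => ℓ i ^ d) := by
  rw [powersSpan, Submodule.span_le]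
  rintro _ ⟨⟨i, e, he⟩, rfl⟩
  rcases Nat.lt_succ_iff_lt_or_eq.1 he with he | rfl
  · refine Submodule.mem_sup_left ⟨((e + 1 : K) * c i)⁻¹ • ℓ i ^ (e + 1),
      Submodule.smul_mem _ _ (pow_mem_powersSpan ℓ he i), ?_⟩
    rw [LinearMap.map_smul, Derivation.coeFn_coe, δ.map_pow_succ_of_eq_algebraMap (hδ i), smul_smul,
      inv_mul_cancel₀ (mul_ne_zero (Nat.cast_add_one_ne_zero e) (hc i)), one_smul]
  · exact Submodule.mem_sup_right (Submodule.subset_span ⟨i, rfl⟩)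

lemma Derivation.finrank_powersSpan_le [CharZero K] [Fintype ι] (δ : Derivation K A A)
    (hδ : ∀ i, δ (ℓ i) = algebraMap K A (c i)) (hc : ∀ i, c i ≠ 0) (d : ℕ) :
    finrank K (powersSpan K ℓ d) ≤
      finrank K ((powersSpan K ℓ d).map (δ : A →ₗ[K] A)) + Fintype.card ι := by
  have : FiniteDimensional K (Submodule.span K (Set.range fun i => ℓ i ^ d)) :=
    FiniteDimensional.span_of_finite K (Set.finite_range _)
  calc finrank K (powersSpan K ℓ d)
      ≤ finrank K ↥((powersSpan K ℓ d).map (δ : A →ₗ[K] A) ⊔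
          Submodule.span K (Set.range fun i => ℓ i ^ d)) :=
        Submodule.finrank_mono (δ.powersSpan_le_map_sup hδ hc d)
    _ ≤ finrank K ((powersSpan K ℓ d).map (δ : A →ₗ[K] A)) +
          finrank K (Submodule.span K (Set.range fun i => ℓ i ^ d)) :=
        Submodule.finrank_add_le_finrank_add_finrank _ _
    _ ≤ _ := Nat.add_le_add_left (finrank_range_le_card _) _

end PowersSpan

theorem stmt5_general (n d : ℕ) (F : MvPolynomial (Fin n) ℂ)
    (α : MvPolynomial (Fin n) ℂ) (hα : α.IsHomogeneous 1)
    (r : ℕ) (c : Fin r → ℂ) (ℓ : Fin r → MvPolynomial (Fin n) ℂ)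
    (hℓ : ∀ i, (ℓ i).IsHomogeneous 1)
    (hFsum : F = ∑ i, c i • ℓ i ^ d)
    (hoff : ∀ i, diffOp α (ℓ i) ≠ 0) :
    apolarLength F - apolarLength (diffOp α F) ≤ r := by
  set V := powersSpan ℂ ℓ d
  set D := Submodule.span ℂ (Set.range fun Θ => diffOp Θ F)
  have hpderiv : ∀ j, ∀ P ∈ V, pderiv j P ∈ V := fun j _ =>
    (pderiv j).apply_mem_powersSpan fun i => eq_C_of_isHomogeneous_zero (hℓ i).pderiv
  have hFV : F ∈ V :=
    hFsum ▸ V.sum_mem fun i _ => V.smul_mem _ (pow_mem_powersSpan ℓ le_rfl i)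
  have hδ : ∀ i, diffOpDerivation hα (ℓ i) = C (coeff 0 (diffOp α (ℓ i))) := fun i => by
    simpa using eq_C_of_isHomogeneous_zero (isHomogeneous_diffOp hα (hℓ i))
  have hδ0 : ∀ i, coeff 0 (diffOp α (ℓ i)) ≠ 0 := fun i h =>
    hoff i (by rw [eq_C_of_isHomogeneous_zero (isHomogeneous_diffOp hα (hℓ i)), h, C_0])
  calc apolarLength F - apolarLength (diffOp α F)
      = Module.finrank ℂ D - Module.finrank ℂ (D.map (diffOpLinear α)) := by
        rw [apolarLength, apolarLength, span_range_diffOp_diffOp]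
    _ ≤ Module.finrank ℂ V - Module.finrank ℂ (V.map (diffOpLinear α)) :=
        Submodule.finrank_sub_finrank_map_le _ (span_range_diffOp_le hpderiv hFV)
    _ ≤ r := by
        have := (diffOpDerivation hα).finrank_powersSpan_le hδ hδ0 d
        rw [Fintype.card_fin] at this
        exact Nat.sub_le_iff_le_add'.2 this

/-- If `F = ∑ cᵢ ℓᵢ^d` with every `ℓᵢ` off the hyperplane defined by `α`
(i.e. `α∘ℓᵢ ≠ 0` for all `i`), then `r ≥ al(F) − al(α∘F)`. -/
theorem stmt5 (n d : ℕ) (F : MvPolynomial (Fin n) ℂ) (hF : F ≠ 0)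
    (hFd : F.IsHomogeneous d)
    (α : MvPolynomial (Fin n) ℂ) (hα : α.IsHomogeneous 1)
    (r : ℕ) (c : Fin r → ℂ) (ℓ : Fin r → MvPolynomial (Fin n) ℂ)
    (hℓ : ∀ i, (ℓ i).IsHomogeneous 1)
    (hFsum : F = ∑ i, c i • ℓ i ^ d)
    (hoff : ∀ i, diffOp α (ℓ i) ≠ 0) :
    apolarLength F - apolarLength (diffOp α F) ≤ r :=
  stmt5_general n d F α hα r c ℓ hℓ hFsum hoff
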